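/- For the unit gadgets U constructed over two semaphores T₁, T₂ (as in the reduction), starting from semaphore values T₁ = T₂ = −2 (i.e., two −T₁ and two −T₂ operations executed initially), the two-chain graph consisting of one chain −U_i and one chain +U_j has a valid schedule if and only if i = j; moreover after executing a complete valid schedule of −U_i and +U_i the semaphore values return to −2 each. -/
import Mathlib


/-- Operations on two semaphores `T₁, T₂`, represented by their increments:
`+T₁ = (1,0)`, `−T₁ = (−1,0)`, `+T₂ = (0,1)`, `−T₂ = (0,−1)`. -/
def pT₁ : ℤ × ℤ := (1, 0)
def mT₁ : ℤ × ℤ := (-1, 0)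
def pT₂ : ℤ × ℤ := (0, 1)
def mT₂ : ℤ × ℤ := (0, -1)

/-- The unit `−U_i`. -/
def negU (i : ℕ) : List (ℤ × ℤ) :=
  [pT₁, pT₂] ++ (List.replicate (i + 1) [mT₁, pT₂]).flatten ++ [mT₂, mT₂, mT₂, mT₂]

/-- The unit `+U_i`. -/
def posU (i : ℕ) : List (ℤ × ℤ) :=
  [pT₁, pT₂] ++ (List.replicate (i + 1) [pT₁, mT₂]).flatten ++ [pT₂, pT₂, mT₁, mT₁]

/-- Realize an interleaving word (`true` = take next op of chain `A`,
`false` = next op of chain `B`). -/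
def realize (A B : List (ℤ × ℤ)) : List Bool → List (ℤ × ℤ)
  | [] => []
  | true :: w => A.headD (0, 0) :: realize A.tail B w
  | false :: w => B.headD (0, 0) :: realize A B.tail w

/-- Starting from semaphore values `−2, −2`, the interleaving is valid when
each semaphore's running value stays nonpositive, i.e. each running sum of
increments stays `≤ 2`. -/
def ValidFrom2 (L : List (ℤ × ℤ)) : Prop :=
  ∀ t, ((L.take t).map Prod.fst).sum ≤ 2 ∧ ((L.take t).map Prod.snd).sum ≤ 2

lemma take_sum_append (X Y : List ℤ) (t : ℕ) :
    ((X ++ Y).take t).sum = (X.take t).sum + (Y.take (t - X.length)).sum := by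
  rw [List.take_append, List.sum_append]

lemma flat_rep_len {α : Type*} (P : List α) : ∀ n, ((List.replicate n P).flatten).length = n * P.length := by
  intro n; induction n with
  | zero => simp
  | succ n ih => rw [List.replicate_succ, List.flatten_cons, List.length_append, ih]; ring

lemma flat_rep_sum (P : List ℤ) : ∀ n, ((List.replicate n P).flatten).sum = n * P.sum := by
  intro n; induction n with
  | zero => simp
  | succ n ih => rw [List.replicate_succ, List.flatten_cons, List.sum_append, ih]; push_cast; ring

lemma flat_rep_count (b : Bool) (P : List Bool) : ∀ n, ((List.replicate n P).flatten).count b = n * P.count b := by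
  intro n; induction n with
  | zero => simp
  | succ n ih => rw [List.replicate_succ, List.flatten_cons, List.count_append, ih]; ring

lemma flat_rep_le (P : List ℤ) (c : ℤ) (h0 : P.sum = 0) (h : ∀ t, (P.take t).sum ≤ c) :
    ∀ n t, (((List.replicate n P).flatten).take t).sum ≤ c := by
  intro n; induction n with
  | zero => intro t; simpa using h 0
  | succ n ih =>
    intro t
    rw [List.replicate_succ, List.flatten_cons, take_sum_append]
    by_cases ht : t ≤ P.length
    · have h2 : t - P.length = 0 := by omega
      rw [h2]; simpa using h t
    · rw [List.take_of_length_le (by omega), h0]; simpa using ih _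

lemma flat_rep_ge (P : List ℤ) (hs : P.sum ≤ 0) (h : ∀ t, P.sum ≤ (P.take t).sum) :
    ∀ (n : ℕ) (t), (n : ℤ) * P.sum ≤ (((List.replicate n P).flatten).take t).sum := by
  intro n; induction n with
  | zero => intro t; simp
  | succ n ih =>
    intro t
    rw [List.replicate_succ, List.flatten_cons, take_sum_append]
    by_cases ht : t ≤ P.length
    · have h2 : t - P.length = 0 := by omega
      rw [h2]
      have h3 : (n : ℤ) * P.sum ≤ 0 := mul_nonpos_of_nonneg_of_nonpos (by positivity) hs
      have h4 := h t
      have h5 : ((n : ℤ) + 1) * P.sum = n * P.sum + P.sum := by ring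
      push_cast
      rw [h5]
      simp only [List.take_zero, List.sum_nil, add_zero]
      linarith
    · rw [List.take_of_length_le (by omega)]
      have := ih (t - P.length)
      push_cast; linarith

lemma realize_take : ∀ (u : List Bool) (A B : List (ℤ × ℤ)) (t : ℕ),
    (realize A B u).take t = realize A B (u.take t)
  | [], A, B, t => by simp [realize]
  | x :: w, A, B, 0 => by simp [realize]
  | true :: w, A, B, t+1 => by
    simp only [realize, List.take_succ_cons, List.take_cons]
    rw [realize_take w]
  | false :: w, A, B, t+1 => by
    simp only [realize, List.take_succ_cons, List.take_cons]
    rw [realize_take w]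

lemma realize_sum (f : ℤ × ℤ → ℤ) (hf : f (0,0) = 0) :
    ∀ (u : List Bool) (A B : List (ℤ × ℤ)),
    ((realize A B u).map f).sum
      = ((A.take (u.count true)).map f).sum + ((B.take (u.count false)).map f).sum
  | [], A, B => by simp [realize]
  | true :: w, A, B => by
    simp only [realize, List.map_cons, List.sum_cons, List.count_cons]
    rw [realize_sum f hf w]
    cases A with
    | nil => simpa using hf
    | cons a A' => simp; ring
  | false :: w, A, B => by
    simp only [realize, List.map_cons, List.sum_cons, List.count_cons]
    rw [realize_sum f hf w]
    cases B with
    | nil => simpa using hf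
    | cons b B' => simp; ring

lemma realize_append : ∀ (u₁ : List Bool) (A₁ B₁ A₂ B₂ : List (ℤ × ℤ)) (u₂ : List Bool),
    u₁.count true = A₁.length → u₁.count false = B₁.length →
    realize (A₁ ++ A₂) (B₁ ++ B₂) (u₁ ++ u₂) = realize A₁ B₁ u₁ ++ realize A₂ B₂ u₂
  | [], A₁, B₁, A₂, B₂, u₂, h1, h2 => by
    simp only [List.count_nil] at h1 h2
    obtain rfl : A₁ = [] := List.length_eq_zero_iff.mp h1.symm
    obtain rfl : B₁ = [] := List.length_eq_zero_iff.mp h2.symm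
    simp [realize]
  | true :: w, A₁, B₁, A₂, B₂, u₂, h1, h2 => by
    simp only [List.count_cons] at h1 h2
    norm_num at h1 h2
    cases A₁ with
    | nil => simp at h1
    | cons a A₁' =>
      simp only [List.cons_append, realize, List.headD_cons, List.tail_cons, List.append_eq]
      rw [realize_append w A₁' B₁ A₂ B₂ u₂ (by simpa using h1) (by simpa using h2)]
  | false :: w, A₁, B₁, A₂, B₂, u₂, h1, h2 => by
    simp only [List.count_cons] at h1 h2
    norm_num at h1 h2
    cases B₁ with
    | nil => simp at h2
    | cons b B₁' =>
      simp only [List.cons_append, realize, List.headD_cons, List.tail_cons, List.append_eq]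
      rw [realize_append w A₁ B₁' A₂ B₂ u₂ (by simpa using h1) (by simpa using h2)]

lemma realize_rep (PA PB : List (ℤ × ℤ)) (pu : List Bool)
    (h1 : pu.count true = PA.length) (h2 : pu.count false = PB.length) :
    ∀ n, realize ((List.replicate n PA).flatten) ((List.replicate n PB).flatten)
        ((List.replicate n pu).flatten)
      = (List.replicate n (realize PA PB pu)).flatten := by
  intro n; induction n with
  | zero => simp [realize]
  | succ n ih =>
    simp only [List.replicate_succ, List.flatten_cons]
    rw [realize_append pu PA PB _ _ _ h1 h2, ih]

lemma count_take_exists (b : Bool) : ∀ (u : List Bool) (k : ℕ), k ≤ u.count b →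
    ∃ t, (u.take t).count b = k
  | [], k, h => by
    simp only [List.count_nil, Nat.le_zero] at h
    exact ⟨0, by simp [h]⟩
  | x :: w, 0, _ => ⟨0, by simp⟩
  | x :: w, k+1, h => by
    rw [List.count_cons] at h
    by_cases hx : x = b
    · subst hx
      have := count_take_exists x w k (by simpa using h)
      obtain ⟨t, ht⟩ := this
      exact ⟨t+1, by simp [List.count_cons, ht]⟩
    · have := count_take_exists b w (k+1) (by simpa [hx] using h)
      obtain ⟨t, ht⟩ := this
      exact ⟨t+1, by simp [List.count_cons, ht, hx]⟩

lemma negU_fst (i : ℕ) : (negU i).map Prod.fst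
    = [1,0] ++ (List.replicate (i+1) [(-1:ℤ),0]).flatten ++ [0,0,0,0] := by
  simp [negU, pT₁, pT₂, mT₁, mT₂, List.map_flatten, List.map_replicate]

lemma negU_snd (i : ℕ) : (negU i).map Prod.snd
    = [0,1] ++ (List.replicate (i+1) [(0:ℤ),1]).flatten ++ [-1,-1,-1,-1] := by
  simp [negU, pT₁, pT₂, mT₁, mT₂, List.map_flatten, List.map_replicate]

lemma posU_fst (j : ℕ) : (posU j).map Prod.fst
    = [1,0] ++ (List.replicate (j+1) [(1:ℤ),0]).flatten ++ [0,0,-1,-1] := by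
  simp [posU, pT₁, pT₂, mT₁, mT₂, List.map_flatten, List.map_replicate]

lemma posU_snd (j : ℕ) : (posU j).map Prod.snd
    = [0,1] ++ (List.replicate (j+1) [(0:ℤ),-1]).flatten ++ [1,1,0,0] := by
  simp [posU, pT₁, pT₂, mT₁, mT₂, List.map_flatten, List.map_replicate]

lemma negU_len (i : ℕ) : (negU i).length = 2*i+8 := by
  simp [negU, List.length_flatten, List.map_replicate, flat_rep_len]; ring

lemma posU_len (j : ℕ) : (posU j).length = 2*j+8 := by
  simp [posU, List.length_flatten, List.map_replicate, flat_rep_len]; ring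

-- short-list prefix sum bounds
lemma p1 : ∀ t, [(-1:ℤ),0].sum ≤ (List.take t [(-1:ℤ),0]).sum := by
  intro t; rcases t with _|_|t <;> norm_num
lemma p2 : ∀ t, [(0:ℤ),-1].sum ≤ (List.take t [(0:ℤ),-1]).sum := by
  intro t; rcases t with _|_|t <;> norm_num
lemma p3 : ∀ t, (List.take t [(0:ℤ),0,0,0]).sum = 0 := by
  intro t; rcases t with _|_|_|_|t <;> norm_num
lemma p4 : ∀ t, 0 ≤ (List.take t [(1:ℤ),1,0,0]).sum := by
  intro t; rcases t with _|_|_|_|t <;> norm_num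
lemma q0a : ∀ t, (List.take t [(1:ℤ),0,1,0]).sum ≤ 2 := by
  intro t; rcases t with _|_|_|_|t <;> norm_num
lemma q0b : ∀ t, (List.take t [(0:ℤ),1,0,1]).sum ≤ 2 := by
  intro t; rcases t with _|_|_|_|t <;> norm_num
lemma qa : ∀ t, (List.take t [(-1:ℤ),1,0,0]).sum ≤ 0 := by
  intro t; rcases t with _|_|_|_|t <;> norm_num
lemma qb : ∀ t, (List.take t [(0:ℤ),0,-1,1]).sum ≤ 0 := by
  intro t; rcases t with _|_|_|_|t <;> norm_num
lemma qc : ∀ t, (List.take t [(0:ℤ),0,0,0,0,0,-1,-1]).sum ≤ 0 := by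
  intro t; rcases t with _|_|_|_|_|_|_|_|_|t <;> norm_num
lemma qd : ∀ t, (List.take t [(-1:ℤ),-1,-1,-1,1,1,0,0]).sum ≤ 0 := by
  intro t; rcases t with _|_|_|_|_|_|_|_|_|t <;> norm_num

lemma LA2 (i : ℕ) : (((negU i).map Prod.snd).take (2*i+4)).sum = (i:ℤ)+2 := by
  rw [negU_snd, List.append_assoc, take_sum_append, take_sum_append]
  rw [List.take_of_length_le (l := [(0:ℤ),1]) (by simp only [List.length_cons, List.length_nil]; omega)]
  rw [List.take_of_length_le (by rw [flat_rep_len]; simp only [List.length_cons, List.length_nil]; omega)]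
  rw [flat_rep_sum]
  have h3 : 2*i+4 - [(0:ℤ),1].length - ((List.replicate (i+1) [(0:ℤ),1]).flatten).length = 0 := by
    rw [flat_rep_len]; simp only [List.length_cons, List.length_nil]; omega
  rw [h3]
  push_cast; norm_num; ring

lemma LB1 (j : ℕ) : (((posU j).map Prod.fst).take (2*j+4)).sum = (j:ℤ)+2 := by
  rw [posU_fst, List.append_assoc, take_sum_append, take_sum_append]
  rw [List.take_of_length_le (l := [(1:ℤ),0]) (by simp only [List.length_cons, List.length_nil]; omega)]
  rw [List.take_of_length_le (by rw [flat_rep_len]; simp only [List.length_cons, List.length_nil]; omega)]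
  rw [flat_rep_sum]
  have h3 : 2*j+4 - [(1:ℤ),0].length - ((List.replicate (j+1) [(1:ℤ),0]).flatten).length = 0 := by
    rw [flat_rep_len]; simp only [List.length_cons, List.length_nil]; omega
  rw [h3]
  push_cast; norm_num; ring

lemma LA1 (i : ℕ) : ∀ t, -(i:ℤ) ≤ (((negU i).map Prod.fst).take t).sum := by
  intro t
  rw [negU_fst, List.append_assoc, take_sum_append, take_sum_append]
  rcases t with _|_|t
  · simp
  · norm_num <;> omega
  · rw [List.take_of_length_le (l := [(1:ℤ),0]) (by simp only [List.length_cons, List.length_nil]; omega)]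
    have e : t + 1 + 1 - [(1:ℤ),0].length = t := by
      simp only [List.length_cons, List.length_nil]; omega
    rw [e]
    have h2 := flat_rep_ge [(-1:ℤ),0] (by norm_num) p1 (i+1) t
    have h3 := p3 (t - ((List.replicate (i+1) [(-1:ℤ),0]).flatten).length)
    rw [h3]
    norm_num at h2 ⊢
    push_cast at h2 ⊢
    linarith

lemma LB2 (j : ℕ) : ∀ t, -(j:ℤ) ≤ (((posU j).map Prod.snd).take t).sum := by
  intro t
  rw [posU_snd, List.append_assoc, take_sum_append, take_sum_append]
  rcases t with _|_|t
  · simp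
  · norm_num <;> omega
  · rw [List.take_of_length_le (l := [(0:ℤ),1]) (by simp only [List.length_cons, List.length_nil]; omega)]
    have e : t + 1 + 1 - [(0:ℤ),1].length = t := by
      simp only [List.length_cons, List.length_nil]; omega
    rw [e]
    have h2 := flat_rep_ge [(0:ℤ),-1] (by norm_num) p2 (j+1) t
    have h3 := p4 (t - ((List.replicate (j+1) [(0:ℤ),-1]).flatten).length)
    rw [flat_rep_len] at h3
    norm_num at h2 h3 ⊢
    push_cast at h2 ⊢
    linarith

/-- With both semaphores initially at `−2`, the two-chain graph `{−U_i, +U_j}`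
has a valid (complete) schedule iff `i = j`; and a complete schedule of
`−U_i, +U_i` returns both semaphores to `−2`. -/
theorem unit_gadget (i j : ℕ) (hi : 1 ≤ i) (hj : 1 ≤ j) :
    ((∃ u : List Bool, u.count true = (negU i).length ∧
        u.count false = (posU j).length ∧
        ValidFrom2 (realize (negU i) (posU j) u)) ↔ i = j) ∧
    ((negU i ++ posU i).map Prod.fst).sum = 0 ∧
    ((negU i ++ posU i).map Prod.snd).sum = 0 := by
  refine ⟨⟨?_, ?_⟩, ?_, ?_⟩
  · rintro ⟨u, hA, hB, hval⟩
    obtain ⟨t₁, ht₁⟩ := count_take_exists true u (2*i+4) (by rw [hA, negU_len]; omega)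
    have h := (hval t₁).2
    rw [realize_take, realize_sum Prod.snd rfl, ht₁, List.map_take, List.map_take, LA2] at h
    have h2 := LB2 j ((u.take t₁).count false)
    obtain ⟨t₂, ht₂⟩ := count_take_exists false u (2*j+4) (by rw [hB, posU_len]; omega)
    have h' := (hval t₂).1
    rw [realize_take, realize_sum Prod.fst rfl, ht₂, List.map_take, List.map_take, LB1] at h'
    have h2' := LA1 i ((u.take t₂).count true)
    have hij : (i:ℤ) ≤ j := by linarith
    have hji : (j:ℤ) ≤ i := by linarith
    exact_mod_cast le_antisymm hij hji
  · rintro rfl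
    refine ⟨[true,true,false,false] ++ (List.replicate (i+1) [true,false,false,true]).flatten
        ++ [true,true,true,true,false,false,false,false], ?_, ?_, ?_⟩
    · rw [negU_len]
      simp [List.count_append, flat_rep_count, List.count_cons]
      omega
    · rw [posU_len]
      simp [List.count_append, flat_rep_count, List.count_cons]
      omega
    · have hreal : realize (negU i) (posU i)
          ([true,true,false,false] ++ (List.replicate (i+1) [true,false,false,true]).flatten
            ++ [true,true,true,true,false,false,false,false])
          = [pT₁,pT₂,pT₁,pT₂] ++ (List.replicate (i+1) [mT₁,pT₁,mT₂,pT₂]).flatten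
            ++ [mT₂,mT₂,mT₂,mT₂,pT₂,pT₂,mT₁,mT₁] := by
        rw [negU, posU, List.append_assoc, List.append_assoc, List.append_assoc]
        rw [realize_append [true,true,false,false] [pT₁,pT₂] [pT₁,pT₂] _ _ _
          (by decide) (by decide)]
        rw [realize_append ((List.replicate (i+1) [true,false,false,true]).flatten)
          ((List.replicate (i+1) [mT₁,pT₂]).flatten) ((List.replicate (i+1) [pT₁,mT₂]).flatten)
          _ _ _
          (by rw [flat_rep_count, flat_rep_len]; norm_num)
          (by rw [flat_rep_count, flat_rep_len]; norm_num)]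
        rw [realize_rep [mT₁,pT₂] [pT₁,mT₂] [true,false,false,true] (by decide) (by decide)]
        rw [List.append_assoc]
        congr 1
      intro t
      constructor
      · rw [List.map_take, hreal]
        have hmap : ([pT₁,pT₂,pT₁,pT₂] ++ (List.replicate (i+1) [mT₁,pT₁,mT₂,pT₂]).flatten
            ++ [mT₂,mT₂,mT₂,mT₂,pT₂,pT₂,mT₁,mT₁]).map Prod.fst
            = [1,0,1,0] ++ (List.replicate (i+1) [(-1:ℤ),1,0,0]).flatten
              ++ [0,0,0,0,0,0,-1,-1] := by
          simp [pT₁, pT₂, mT₁, mT₂, List.map_flatten, List.map_replicate]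
        rw [hmap, List.append_assoc, take_sum_append, take_sum_append]
        have b1 := q0a t
        have b2 := flat_rep_le [(-1:ℤ),1,0,0] 0 (by norm_num) qa (i+1)
          (t - [(1:ℤ),0,1,0].length)
        have b3 := qc (t - [(1:ℤ),0,1,0].length
          - ((List.replicate (i+1) [(-1:ℤ),1,0,0]).flatten).length)
        linarith
      · rw [List.map_take, hreal]
        have hmap : ([pT₁,pT₂,pT₁,pT₂] ++ (List.replicate (i+1) [mT₁,pT₁,mT₂,pT₂]).flatten
            ++ [mT₂,mT₂,mT₂,mT₂,pT₂,pT₂,mT₁,mT₁]).map Prod.snd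
            = [0,1,0,1] ++ (List.replicate (i+1) [(0:ℤ),0,-1,1]).flatten
              ++ [-1,-1,-1,-1,1,1,0,0] := by
          simp [pT₁, pT₂, mT₁, mT₂, List.map_flatten, List.map_replicate]
        rw [hmap, List.append_assoc, take_sum_append, take_sum_append]
        have b1 := q0b t
        have b2 := flat_rep_le [(0:ℤ),0,-1,1] 0 (by norm_num) qb (i+1)
          (t - [(0:ℤ),1,0,1].length)
        have b3 := qd (t - [(0:ℤ),1,0,1].length
          - ((List.replicate (i+1) [(0:ℤ),0,-1,1]).flatten).length)
        linarith
  · rw [List.map_append, List.sum_append, negU_fst, posU_fst]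
    simp [List.sum_append, flat_rep_sum]
    ring
  · rw [List.map_append, List.sum_append, negU_snd, posU_snd]
    simp [List.sum_append, flat_rep_sum]
    ring
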